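/- Let d ≥ 3, let g be the Green function of simple random walk on ℤ^d with g(x,y) ≤ c_* |y−x|^{2−d}, and set η = (c_* M^d)^{−1} ∧ inf_{L ≥ 1} cap([0,L)^d)/L^{d−2} > 0, where M is a fixed integer. Let B̄ be a box partitioned into M^d subboxes B̂ of equal side. Call B̂ sparse (with respect to a set A ⊆ ℤ^d) if cap(B̂ ∩ A) < η |B̂|^{(d−2)/d}. Then cap(B̄ ∩ A) ≥ (3^d + 1)^{−1} · ∑_{B̂ ⊆ B̄ sparse} cap(B̂ ∩ A). -/

import Mathlib

open scoped Classical

/-- A package for the potential theory of simple random walk on ℤ^d, d ≥ 3: the Green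
function `g`, and for each finite set its equilibrium measure `eqm`, characterized by:
`eqm A` is nonnegative, supported on `A`, its potential `G(eqm A) = ∑ y, g · y * eqm A y`
equals `1` on `A` (the equilibrium potential `h_A = P_·[H_A < ∞]` equals 1 on A) and is
everywhere at most `1`. The capacity is the total mass of the equilibrium measure. -/
structure GreenKit (d : ℕ) where
  g : (Fin d → ℤ) → (Fin d → ℤ) → ℝ
  eqm : Finset (Fin d → ℤ) → (Fin d → ℤ) → ℝ
  g_symm : ∀ x y, g x y = g y x
  g_nonneg : ∀ x y, 0 ≤ g x y
  eqm_nonneg : ∀ A x, 0 ≤ eqm A x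
  eqm_support : ∀ A x, x ∉ A → eqm A x = 0
  pot_eq_one : ∀ A : Finset (Fin d → ℤ), ∀ x ∈ A, ∑ y ∈ A, g x y * eqm A y = 1
  pot_le_one : ∀ (A : Finset (Fin d → ℤ)) (x : Fin d → ℤ), ∑ y ∈ A, g x y * eqm A y ≤ 1

/-- The capacity of a finite set: total mass of its equilibrium measure. -/
def GreenKit.cap {d : ℕ} (κ : GreenKit d) (A : Finset (Fin d → ℤ)) : ℝ :=
  ∑ x ∈ A, κ.eqm A x


/-- The lattice box `x₀ + [0,L)^d ∩ ℤ^d`. -/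
noncomputable def latticeBox (d : ℕ) (x₀ : Fin d → ℤ) (L : ℕ) : Finset (Fin d → ℤ) :=
  Finset.Icc x₀ (fun i => x₀ i + L - 1)

/-- Euclidean norm of an integer vector. -/
noncomputable def enormZ {m : ℕ} (v : Fin m → ℤ) : ℝ :=
  Real.sqrt (∑ i, ((v i : ℝ)) ^ 2)

/-! Superpose the equilibrium measures of the sparse pieces `B̂ ∩ A` into `ν`. On their union `S`
the potential `Gν` is at most `3^d + 1`: the at most `3^d` subboxes adjacent to the one containing
`x` contribute at most `1` each (`G e_C ≤ 1`), and every other sparse piece lies at distance `≥ L`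
from `x`, so it contributes at most `c_* L^{2-d} · η L^{d-2} ≤ M^{-d}`. Testing `ν` against `e_S`
gives `∑ cap(B̂ ∩ A) ≤ (3^d + 1) cap S`, and `S ⊆ B̄ ∩ A`. -/

open Finset

namespace GreenKit

variable {d : ℕ} (κ : GreenKit d)

lemma sum_mul_eqm_of_subset {A T : Finset (Fin d → ℤ)} (h : A ⊆ T) (f : (Fin d → ℤ) → ℝ) :
    ∑ y ∈ T, f y * κ.eqm A y = ∑ y ∈ A, f y * κ.eqm A y :=
  (sum_subset h fun y _ hy => by rw [κ.eqm_support A y hy, mul_zero]).symm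

lemma cap_eq_sum_of_subset {A T : Finset (Fin d → ℤ)} (h : A ⊆ T) :
    κ.cap A = ∑ y ∈ T, κ.eqm A y := by
  simpa only [cap, one_mul] using (κ.sum_mul_eqm_of_subset h fun _ => 1).symm

/-- By symmetry of `g`, `∑_S ν = ∑_S ν · G e_S = ∑_S e_S · Gν`. -/
lemma sum_le_mul_cap (S : Finset (Fin d → ℤ)) (ν : (Fin d → ℤ) → ℝ) (C : ℝ)
    (hpot : ∀ y ∈ S, ∑ x ∈ S, κ.g y x * ν x ≤ C) : ∑ x ∈ S, ν x ≤ C * κ.cap S :=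
  calc ∑ x ∈ S, ν x = ∑ x ∈ S, ∑ y ∈ S, ν x * (κ.g x y * κ.eqm S y) := by
        refine sum_congr rfl fun x hx => ?_
        rw [← mul_sum, κ.pot_eq_one S x hx, mul_one]
    _ = ∑ y ∈ S, κ.eqm S y * ∑ x ∈ S, κ.g y x * ν x := by
        rw [sum_comm]
        refine sum_congr rfl fun y _ => ?_
        rw [mul_sum]
        refine sum_congr rfl fun x _ => ?_
        rw [κ.g_symm y x]
        ring
    _ ≤ ∑ y ∈ S, κ.eqm S y * C :=
        sum_le_sum fun y hy => mul_le_mul_of_nonneg_left (hpot y hy) (κ.eqm_nonneg S y)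
    _ = C * κ.cap S := by rw [cap, ← sum_mul, mul_comm]

lemma cap_mono {S T : Finset (Fin d → ℤ)} (h : S ⊆ T) : κ.cap S ≤ κ.cap T := by
  have := κ.sum_le_mul_cap T (κ.eqm S) 1 fun y _ => by
    rw [κ.sum_mul_eqm_of_subset h (κ.g y)]
    exact κ.pot_le_one S y
  rwa [← κ.cap_eq_sum_of_subset h, one_mul] at this

lemma pot_le_mul_cap {C : Finset (Fin d → ℤ)} {x : Fin d → ℤ} {a : ℝ}
    (h : ∀ y ∈ C, κ.g x y ≤ a) : ∑ y ∈ C, κ.g x y * κ.eqm C y ≤ a * κ.cap C := by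
  rw [cap, mul_sum]
  exact sum_le_sum fun y hy => mul_le_mul_of_nonneg_right (h y hy) (κ.eqm_nonneg C y)

lemma pot_le_mul_of_le_div {C : Finset (Fin d → ℤ)} {x : Fin d → ℤ} {c η t : ℝ} (ht : 0 < t)
    (hgC : ∀ y ∈ C, κ.g x y ≤ c / t) (hcap : κ.cap C ≤ η * t) (hc : 0 ≤ c) :
    ∑ y ∈ C, κ.g x y * κ.eqm C y ≤ c * η :=
  calc ∑ y ∈ C, κ.g x y * κ.eqm C y ≤ c / t * κ.cap C := κ.pot_le_mul_cap hgC
    _ ≤ c / t * (η * t) := by gcongr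
    _ = c * η := by field_simp

lemma sum_cap_le_mul_cap_biUnion {ι : Type*} (s : Finset ι) (B : ι → Finset (Fin d → ℤ))
    (C : ℝ)
    (hpot : ∀ x ∈ s.biUnion B, ∑ w ∈ s, ∑ y ∈ B w, κ.g x y * κ.eqm (B w) y ≤ C) :
    ∑ w ∈ s, κ.cap (B w) ≤ C * κ.cap (s.biUnion B) := by
  have hB : ∀ w ∈ s, B w ⊆ s.biUnion B := fun w hw => subset_biUnion_of_mem B hw
  calc ∑ w ∈ s, κ.cap (B w) = ∑ x ∈ s.biUnion B, ∑ w ∈ s, κ.eqm (B w) x := by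
        rw [sum_comm]
        exact sum_congr rfl fun w hw => κ.cap_eq_sum_of_subset (hB w hw)
    _ ≤ C * κ.cap (s.biUnion B) := κ.sum_le_mul_cap _ _ C fun x hx => by
        calc ∑ y ∈ s.biUnion B, κ.g x y * ∑ w ∈ s, κ.eqm (B w) y
            = ∑ w ∈ s, ∑ y ∈ B w, κ.g x y * κ.eqm (B w) y := by
              simp_rw [mul_sum]
              rw [sum_comm]
              exact sum_congr rfl fun w hw => κ.sum_mul_eqm_of_subset (hB w hw) _
          _ ≤ C := hpot x hx

end GreenKit

lemma mem_latticeBox {d : ℕ} {x₀ x : Fin d → ℤ} {L : ℕ} :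
    x ∈ latticeBox d x₀ L ↔ ∀ i, x₀ i ≤ x i ∧ x i < x₀ i + L := by
  simp only [latticeBox, mem_Icc, Pi.le_def, ← forall_and]
  exact forall_congr' fun i => by omega

lemma abs_le_enormZ {m : ℕ} (v : Fin m → ℤ) (i : Fin m) : |(v i : ℝ)| ≤ enormZ v := by
  rw [enormZ, ← Real.sqrt_sq_eq_abs]
  exact Real.sqrt_le_sqrt
    (single_le_sum (f := fun j => ((v j : ℝ)) ^ 2) (fun j _ => sq_nonneg _) (mem_univ i))

noncomputable def subbox {d M : ℕ} (z : Fin d → ℤ) (L : ℕ) (w : Fin d → Fin M) :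
    Finset (Fin d → ℤ) :=
  latticeBox d (fun i => z i + (w i : ℤ) * L) L

section Subbox

variable {d M : ℕ} {z : Fin d → ℤ} {L : ℕ}

lemma subbox_subset_latticeBox (w : Fin d → Fin M) : subbox z L w ⊆ latticeBox d z (M * L) := by
  intro x hx
  rw [subbox, mem_latticeBox] at hx
  refine mem_latticeBox.mpr fun i => ?_
  have hw : ((w i : ℤ) + 1) * L ≤ M * L := by exact_mod_cast Nat.mul_le_mul_right L (w i).isLt
  have hw0 : 0 ≤ (w i : ℤ) * L := by positivity
  push_cast
  constructor <;> linarith [hx i]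

lemma le_abs_sub_of_mem_subbox {v w : Fin d → Fin M} {x y : Fin d → ℤ} (hx : x ∈ subbox z L v)
    (hy : y ∈ subbox z L w) {i : Fin d} (hi : 1 < |(w i : ℤ) - v i|) : (L : ℤ) ≤ |y i - x i| := by
  rw [subbox, mem_latticeBox] at hx hy
  have hL : (0 : ℤ) ≤ L := by positivity
  rcases lt_abs.mp hi with h | h
  · have := mul_le_mul_of_nonneg_right (show (2 : ℤ) ≤ w i - v i by omega) hL
    exact le_abs.mpr (Or.inl (by linarith [hx i, hy i]))
  · have := mul_le_mul_of_nonneg_right (show (2 : ℤ) ≤ -(w i - v i) by omega) hL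
    exact le_abs.mpr (Or.inr (by linarith [hx i, hy i]))

def SubboxAdj (v w : Fin d → Fin M) : Prop :=
  ∀ i, |(w i : ℤ) - v i| ≤ 1

lemma card_filter_subboxAdj_le (v : Fin d → Fin M) (s : Finset (Fin d → Fin M)) :
    #(s.filter (SubboxAdj v)) ≤ 3 ^ d := by
  calc _ ≤ #(Fintype.piFinset fun i => Icc ((v i : ℤ) - 1) (v i + 1)) := by
        refine card_le_card_of_injOn (fun w i => (w i : ℤ)) (fun w hw => ?_)
          fun a _ b _ hab => funext fun i => Fin.ext (Int.natCast_inj.mp (congrFun hab i))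
        rw [mem_coe, Fintype.mem_piFinset]
        intro i
        have := abs_le.mp ((mem_filter.mp hw).2 i)
        rw [mem_Icc]
        dsimp only
        omega
    _ = 3 ^ d := by
        simp only [Fintype.card_piFinset, Int.card_Icc]
        ring_nf
        simp

end Subbox

section SparseSubboxes

variable {d M : ℕ} (κ : GreenKit d) {cstar : ℝ}

lemma g_le_of_not_subboxAdj
    (hg : ∀ x y, x ≠ y → κ.g x y ≤ cstar * enormZ (y - x) ^ (-((d : ℝ) - 2)))
    (hd : 2 ≤ d) (hcstar : 0 ≤ cstar) {z : Fin d → ℤ} {L : ℕ}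
    (hL : 0 < L) {v w : Fin d → Fin M} {x y : Fin d → ℤ} (hx : x ∈ subbox z L v)
    (hy : y ∈ subbox z L w) (hfar : ¬ SubboxAdj v w) :
    κ.g x y ≤ cstar / (L : ℝ) ^ ((d : ℝ) - 2) := by
  obtain ⟨i, hi⟩ := not_forall.mp hfar
  have hsep := le_abs_sub_of_mem_subbox hx hy (not_le.mp hi)
  have hxy : x ≠ y := by
    rintro rfl
    simp only [sub_self, abs_zero] at hsep
    omega
  have hnorm : (L : ℝ) ≤ enormZ (y - x) := by
    have h := abs_le_enormZ (y - x) i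
    rw [Pi.sub_apply, ← Int.cast_abs] at h
    exact le_trans (by exact_mod_cast hsep) h
  have hL' : (0 : ℝ) < L := by exact_mod_cast hL
  have hexp : -((d : ℝ) - 2) ≤ 0 := by
    have : (2 : ℝ) ≤ d := by exact_mod_cast hd
    linarith
  calc κ.g x y ≤ cstar * enormZ (y - x) ^ (-((d : ℝ) - 2)) := hg x y hxy
    _ ≤ cstar * (L : ℝ) ^ (-((d : ℝ) - 2)) :=
        mul_le_mul_of_nonneg_left (Real.rpow_le_rpow_of_nonpos hL' hnorm hexp) hcstar
    _ = cstar / (L : ℝ) ^ ((d : ℝ) - 2) := by rw [Real.rpow_neg hL'.le, div_eq_mul_inv]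

lemma pot_sum_sparse_le
    (hg : ∀ x y, x ≠ y → κ.g x y ≤ cstar * enormZ (y - x) ^ (-((d : ℝ) - 2)))
    (hd : 2 ≤ d) (hcstar : 0 ≤ cstar) {η : ℝ} (hη₀ : 0 ≤ η)
    (hηM : η ≤ (cstar * M ^ d)⁻¹) {z : Fin d → ℤ} {L : ℕ} (hL : 0 < L)
    (A : Finset (Fin d → ℤ)) (s : Finset (Fin d → Fin M))
    (hs : ∀ w ∈ s, κ.cap (subbox z L w ∩ A) ≤ η * (L : ℝ) ^ ((d : ℝ) - 2))
    {v : Fin d → Fin M} {x : Fin d → ℤ} (hx : x ∈ subbox z L v) :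
    ∑ w ∈ s, ∑ y ∈ subbox z L w ∩ A, κ.g x y * κ.eqm (subbox z L w ∩ A) y ≤ 3 ^ d + 1 := by
  rw [← sum_filter_add_sum_filter_not s (SubboxAdj v)]
  have hnear : ∑ w ∈ s.filter (SubboxAdj v), ∑ y ∈ subbox z L w ∩ A,
      κ.g x y * κ.eqm (subbox z L w ∩ A) y ≤ 3 ^ d :=
    calc _ ≤ #(s.filter (SubboxAdj v)) • (1 : ℝ) :=
          sum_le_card_nsmul _ _ _ fun w _ => κ.pot_le_one _ x
      _ ≤ 3 ^ d := by
        rw [nsmul_one]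
        exact_mod_cast card_filter_subboxAdj_le v s
  have hfar : ∑ w ∈ s.filter (¬ SubboxAdj v ·), ∑ y ∈ subbox z L w ∩ A,
      κ.g x y * κ.eqm (subbox z L w ∩ A) y ≤ 1 :=
    calc _ ≤ #(s.filter (¬ SubboxAdj v ·)) • (cstar * η) := by
          refine sum_le_card_nsmul _ _ _ fun w hw => ?_
          obtain ⟨hws, hwfar⟩ := mem_filter.mp hw
          exact κ.pot_le_mul_of_le_div (by positivity)
            (fun y hy => g_le_of_not_subboxAdj κ hg hd hcstar hL hx
              (mem_of_mem_inter_left hy) hwfar) (hs w hws) hcstar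
      _ ≤ M ^ d * (cstar * η) := by
          rw [nsmul_eq_mul]
          gcongr
          exact_mod_cast (card_le_univ _).trans_eq (by simp)
      _ ≤ M ^ d * (cstar * (cstar * M ^ d)⁻¹) := by gcongr
      _ = (cstar * M ^ d) * (cstar * M ^ d)⁻¹ := by ring
      _ ≤ 1 := mul_inv_le_one
  linarith

end SparseSubboxes

theorem stmt_6_general (d M : ℕ) (hd : 3 ≤ d) (κ : GreenKit d)
    (cstar : ℝ) (hcstar : 0 < cstar)
    (hg : ∀ x y, x ≠ y → κ.g x y ≤ cstar * enormZ (y - x) ^ (-((d : ℝ) - 2)))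
    (η : ℝ)
    (hη : η = min ((cstar * (M : ℝ) ^ d)⁻¹)
      (sInf {r : ℝ | ∃ L : ℕ, 1 ≤ L ∧ r = κ.cap (latticeBox d 0 L) / (L : ℝ) ^ (d - 2)}))
    (hηpos : 0 < η)
    (L : ℕ) (hL : 1 ≤ L) (z : Fin d → ℤ) (A : Finset (Fin d → ℤ)) :
    ((3 : ℝ) ^ d + 1)⁻¹ *
        ∑ w : Fin d → Fin M,
          (if κ.cap ((latticeBox d (fun i => z i + (w i : ℤ) * L) L) ∩ A) <
              η * ((L : ℝ) ^ d) ^ (((d : ℝ) - 2) / d)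
           then κ.cap ((latticeBox d (fun i => z i + (w i : ℤ) * L) L) ∩ A) else 0)
      ≤ κ.cap ((latticeBox d z (M * L)) ∩ A) := by
  have hvol : ((L : ℝ) ^ d) ^ (((d : ℝ) - 2) / d) = (L : ℝ) ^ ((d : ℝ) - 2) := by
    rw [← Real.rpow_natCast (L : ℝ) d, ← Real.rpow_mul (Nat.cast_nonneg L)]
    congr 1
    field_simp
  let sparse := univ.filter fun w : Fin d → Fin M =>
    κ.cap (subbox z L w ∩ A) < η * ((L : ℝ) ^ d) ^ (((d : ℝ) - 2) / d)
  have hpot : ∀ x ∈ sparse.biUnion (fun w => subbox z L w ∩ A), ∑ w ∈ sparse,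
      ∑ y ∈ subbox z L w ∩ A, κ.g x y * κ.eqm (subbox z L w ∩ A) y ≤ 3 ^ d + 1 := by
    intro x hx
    obtain ⟨v, -, hxv⟩ := mem_biUnion.mp hx
    exact pot_sum_sparse_le κ hg (by omega) hcstar.le hηpos.le (hη.le.trans (min_le_left _ _))
      hL A sparse (fun w hw => hvol ▸ (mem_filter.mp hw).2.le) (mem_of_mem_inter_left hxv)
  calc _ = ((3 : ℝ) ^ d + 1)⁻¹ * ∑ w ∈ sparse, κ.cap (subbox z L w ∩ A) := by
        rw [sum_filter]
        rfl
    _ ≤ κ.cap (sparse.biUnion fun w => subbox z L w ∩ A) := by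
        rw [inv_mul_le_iff₀ (by positivity)]
        exact κ.sum_cap_le_mul_cap_biUnion _ _ _ hpot
    _ ≤ κ.cap (latticeBox d z (M * L) ∩ A) :=
        κ.cap_mono (biUnion_subset.mpr fun w _ =>
          inter_subset_inter_right (subbox_subset_latticeBox w))

/-- near-additivity of capacity over sparse subboxes.  With
`η = (c_* M^d)⁻¹ ∧ inf_{L≥1} cap([0,L)^d)/L^{d−2}`, if the box `B̄` of side `ML` is
partitioned into the `M^d` subboxes `B̂_w` of side `L`, and `B̂_w` is called sparse when
`cap(B̂_w ∩ A) < η |B̂_w|^{(d−2)/d}`, then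
`cap(B̄ ∩ A) ≥ (3^d+1)⁻¹ ∑_{B̂ sparse} cap(B̂ ∩ A)`. -/
theorem stmt_6 (d M : ℕ) (hd : 3 ≤ d) (hM : 1 ≤ M) (κ : GreenKit d)
    (cstar : ℝ) (hcstar : 0 < cstar)
    (hg : ∀ x y, x ≠ y → κ.g x y ≤ cstar * enormZ (y - x) ^ (-((d : ℝ) - 2)))
    (η : ℝ)
    (hη : η = min ((cstar * (M : ℝ) ^ d)⁻¹)
      (sInf {r : ℝ | ∃ L : ℕ, 1 ≤ L ∧ r = κ.cap (latticeBox d 0 L) / (L : ℝ) ^ (d - 2)}))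
    (hηpos : 0 < η)
    (L : ℕ) (hL : 1 ≤ L) (z : Fin d → ℤ) (A : Finset (Fin d → ℤ)) :
    ((3 : ℝ) ^ d + 1)⁻¹ *
        ∑ w : Fin d → Fin M,
          (if κ.cap ((latticeBox d (fun i => z i + (w i : ℤ) * L) L) ∩ A) <
              η * ((L : ℝ) ^ d) ^ (((d : ℝ) - 2) / d)
           then κ.cap ((latticeBox d (fun i => z i + (w i : ℤ) * L) L) ∩ A) else 0)
      ≤ κ.cap ((latticeBox d z (M * L)) ∩ A) :=
  stmt_6_general d M hd κ cstar hcstar hg η hη hηpos L hL z A
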